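/- Let μ ∈ (0,1), κ ∈ (0, 1−μ), and let K : [0,1]×[0,1] → ℝ be continuous and κ-Hölder in its first variable. Then there exists a constant C > 0 such that for every continuous v : [0,1] → ℝ, the function 𝒦₁v is κ-Hölder continuous on [0,1] and ‖𝒦₁v‖_{0,κ} ≤ C · max_{θ∈[0,1]} |v(θ)|. -/

import Mathlib

open MeasureTheory Set

/-!
With `F(t,s) = K(t,s) v(s)`, which is bounded by `‖K‖∞ ‖v‖∞` and `κ`-Hölder in `t` with
constant `Lip ‖v‖∞`, the increment `𝒦₁v(θ) - 𝒦₁v(η)` for `η ≤ θ` equals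
`∫₀^η (θ-s)^{-μ} (F(θ,s) - F(η,s)) ds - ∫₀^η ((η-s)^{-μ} - (θ-s)^{-μ}) F(η,s) ds
  + ∫_η^θ (θ-s)^{-μ} F(θ,s) ds`.
All three weights are nonnegative with explicit integrals, so the first term is
`O((θ-η)^κ)` and the other two are `O((θ-η)^{1-μ})`; as `θ - η ≤ 1` and `κ ≤ 1 - μ`,
`(θ-η)^{1-μ} ≤ (θ-η)^κ`.
-/

/-- The weakly singular Volterra integral operator
`(𝒦₁v)(t) = ∫₀^t (t-s)^{-μ} K(t,s) v(s) ds`. -/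
noncomputable def K1op (μ : ℝ) (K : ℝ → ℝ → ℝ) (v : ℝ → ℝ) (t : ℝ) : ℝ :=
  ∫ s in (0:ℝ)..t, (t - s) ^ (-μ) * K t s * v s

noncomputable def weaklySingularIntegral (μ : ℝ) (F : ℝ → ℝ → ℝ) (t : ℝ) : ℝ :=
  ∫ s in (0:ℝ)..t, (t - s) ^ (-μ) * F t s

theorem K1op_eq_weaklySingularIntegral (μ : ℝ) (K : ℝ → ℝ → ℝ) (v : ℝ → ℝ) :
    K1op μ K v = weaklySingularIntegral μ (fun t s => K t s * v s) := by
  funext t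
  simp only [K1op, weaklySingularIntegral, mul_assoc]

theorem abs_integral_mul_le_of_abs_le {w f : ℝ → ℝ} {a b B : ℝ} (hab : a ≤ b)
    (hw : IntervalIntegrable w volume a b) (hw0 : ∀ s ∈ Ioo a b, 0 ≤ w s)
    (hf : ∀ s ∈ Ioo a b, |f s| ≤ B) :
    |∫ s in a..b, w s * f s| ≤ B * ∫ s in a..b, w s := by
  have hbound : ∀ᵐ s, s ∈ Ioc a b → ‖w s * f s‖ ≤ B * w s := by
    filter_upwards [Measure.ae_ne volume b] with s hsb hs
    have hs' : s ∈ Ioo a b := ⟨hs.1, lt_of_le_of_ne hs.2 hsb⟩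
    rw [Real.norm_eq_abs, abs_mul, abs_of_nonneg (hw0 s hs'), mul_comm B]
    exact mul_le_mul_of_nonneg_left (hf s hs') (hw0 s hs')
  rw [← intervalIntegral.integral_const_mul]
  exact intervalIntegral.norm_integral_le_of_norm_le hab hbound (hw.const_mul B)

section RpowKernel

variable {μ : ℝ}

theorem integral_sub_rpow_neg (hμ : μ < 1) (t a b : ℝ) :
    ∫ s in a..b, (t - s) ^ (-μ) = ((t - a) ^ (1 - μ) - (t - b) ^ (1 - μ)) / (1 - μ) := by
  rw [intervalIntegral.integral_comp_sub_left (fun x : ℝ => x ^ (-μ)) t,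
    integral_rpow (Or.inl (by linarith)), show -μ + 1 = 1 - μ by ring]

theorem intervalIntegrable_sub_rpow_neg (hμ : μ < 1) (t a b : ℝ) :
    IntervalIntegrable (fun s => (t - s) ^ (-μ)) volume a b := by
  simpa using (intervalIntegral.intervalIntegrable_rpow' (a := t - a) (b := t - b)
    (by linarith : -1 < -μ)).comp_sub_left t

theorem abs_integral_sub_rpow_neg_mul_le (hμ : μ < 1) {f : ℝ → ℝ} {t a b B : ℝ}
    (hab : a ≤ b) (hbt : b ≤ t) (hf : ∀ s ∈ Ioo a b, |f s| ≤ B) :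
    |∫ s in a..b, (t - s) ^ (-μ) * f s|
      ≤ B * (((t - a) ^ (1 - μ) - (t - b) ^ (1 - μ)) / (1 - μ)) := by
  rw [← integral_sub_rpow_neg hμ]
  exact abs_integral_mul_le_of_abs_le hab (intervalIntegrable_sub_rpow_neg hμ t a b)
    (fun s hs => Real.rpow_nonneg (by linarith [hs.2]) _) hf

theorem abs_integral_rpow_neg_sub_mul_le (hμ0 : 0 ≤ μ) (hμ1 : μ < 1) {f : ℝ → ℝ}
    {a η θ B : ℝ} (haη : a ≤ η) (hηθ : η ≤ θ) (hf : ∀ s ∈ Ioo a η, |f s| ≤ B) :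
    |∫ s in a..η, ((η - s) ^ (-μ) - (θ - s) ^ (-μ)) * f s|
      ≤ B * (((η - a) ^ (1 - μ) - (θ - a) ^ (1 - μ) + (θ - η) ^ (1 - μ)) / (1 - μ)) := by
  have hw := (intervalIntegrable_sub_rpow_neg hμ1 η a η).sub
    (intervalIntegrable_sub_rpow_neg hμ1 θ a η)
  have hw0 : ∀ s ∈ Ioo a η, 0 ≤ (η - s) ^ (-μ) - (θ - s) ^ (-μ) := fun s hs =>
    sub_nonneg.2 (Real.rpow_le_rpow_of_nonpos (by linarith [hs.2]) (by linarith) (by linarith))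
  convert abs_integral_mul_le_of_abs_le haη hw hw0 hf using 2
  rw [intervalIntegral.integral_sub (intervalIntegrable_sub_rpow_neg hμ1 η a η)
    (intervalIntegrable_sub_rpow_neg hμ1 θ a η), integral_sub_rpow_neg hμ1,
    integral_sub_rpow_neg hμ1, sub_self, Real.zero_rpow (by linarith)]
  ring

end RpowKernel

section WeaklySingularIntegral

variable {μ κ A L : ℝ} {F : ℝ → ℝ → ℝ}

theorem weaklySingularIntegral_sub_eq (hμ : μ < 1) {η θ : ℝ} (hη : 0 ≤ η) (hηθ : η ≤ θ)
    (hFθ : ContinuousOn (F θ) (Icc 0 θ)) (hFη : ContinuousOn (F η) (Icc 0 η)) :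
    weaklySingularIntegral μ F θ - weaklySingularIntegral μ F η =
      (∫ s in (0:ℝ)..η, (θ - s) ^ (-μ) * (F θ s - F η s))
        - (∫ s in (0:ℝ)..η, ((η - s) ^ (-μ) - (θ - s) ^ (-μ)) * F η s)
        + ∫ s in η..θ, (θ - s) ^ (-μ) * F θ s := by
  have hθ₀ : ContinuousOn (F θ) (uIcc 0 η) :=
    hFθ.mono (by rw [uIcc_of_le hη]; exact Icc_subset_Icc le_rfl hηθ)
  have hθ₁ : ContinuousOn (F θ) (uIcc η θ) :=
    hFθ.mono (by rw [uIcc_of_le hηθ]; exact Icc_subset_Icc hη le_rfl)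
  have hη₀ : ContinuousOn (F η) (uIcc 0 η) := by rwa [uIcc_of_le hη]
  have iθθ := (intervalIntegrable_sub_rpow_neg hμ θ 0 η).mul_continuousOn hθ₀
  have iθη := (intervalIntegrable_sub_rpow_neg hμ θ 0 η).mul_continuousOn hη₀
  have iηη := (intervalIntegrable_sub_rpow_neg hμ η 0 η).mul_continuousOn hη₀
  have iθ' := (intervalIntegrable_sub_rpow_neg hμ θ η θ).mul_continuousOn hθ₁
  simp only [weaklySingularIntegral, mul_sub, sub_mul]
  rw [← intervalIntegral.integral_add_adjacent_intervals iθθ iθ',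
    intervalIntegral.integral_sub iθθ iθη, intervalIntegral.integral_sub iηη iθη]
  ring

theorem abs_weaklySingularIntegral_le (hμ : μ < 1)
    (hFbdd : ∀ t ∈ Icc (0:ℝ) 1, ∀ s ∈ Icc (0:ℝ) 1, |F t s| ≤ A) {t : ℝ} (ht : t ∈ Icc (0:ℝ) 1) :
    |weaklySingularIntegral μ F t| ≤ A / (1 - μ) := by
  have hA : 0 ≤ A :=
    (abs_nonneg _).trans (hFbdd 0 (left_mem_Icc.2 zero_le_one) 0 (left_mem_Icc.2 zero_le_one))
  have hbound := abs_integral_sub_rpow_neg_mul_le hμ ht.1 le_rfl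
    (fun s hs => hFbdd t ht s ⟨hs.1.le, hs.2.le.trans ht.2⟩)
  rw [sub_zero, sub_self, Real.zero_rpow (by linarith), sub_zero, mul_div_assoc'] at hbound
  refine hbound.trans (div_le_div_of_nonneg_right ?_ (by linarith))
  exact mul_le_of_le_one_right hA (Real.rpow_le_one ht.1 ht.2 (by linarith))

theorem abs_weaklySingularIntegral_sub_le_of_le (hμ0 : 0 ≤ μ) (hμ1 : μ < 1) (hκ0 : 0 ≤ κ)
    (hκμ : κ ≤ 1 - μ) (hL : 0 ≤ L)
    (hFcont : ∀ t ∈ Icc (0:ℝ) 1, ContinuousOn (F t) (Icc 0 1))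
    (hFbdd : ∀ t ∈ Icc (0:ℝ) 1, ∀ s ∈ Icc (0:ℝ) 1, |F t s| ≤ A)
    (hFhol : ∀ θ ∈ Icc (0:ℝ) 1, ∀ η ∈ Icc (0:ℝ) 1, ∀ s ∈ Icc (0:ℝ) 1,
      |F θ s - F η s| ≤ L * |θ - η| ^ κ)
    {η θ : ℝ} (hη : η ∈ Icc (0:ℝ) 1) (hθ : θ ∈ Icc (0:ℝ) 1) (hηθ : η ≤ θ) :
    |weaklySingularIntegral μ F θ - weaklySingularIntegral μ F η|
      ≤ (L + 2 * A) / (1 - μ) * (θ - η) ^ κ := by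
  have hA : 0 ≤ A :=
    (abs_nonneg _).trans (hFbdd 0 (left_mem_Icc.2 zero_le_one) 0 (left_mem_Icc.2 zero_le_one))
  have hμ' : 0 < 1 - μ := by linarith
  have hδ : θ - η ∈ Icc (0:ℝ) 1 := ⟨by linarith, by linarith [hη.1, hθ.2]⟩
  have mem_of_Ioo {a b : ℝ} (ha : 0 ≤ a) (hb : b ≤ 1) {s : ℝ} (hs : s ∈ Ioo a b) :
      s ∈ Icc (0:ℝ) 1 := ⟨ha.trans hs.1.le, hs.2.le.trans hb⟩
  have hfirst := abs_integral_sub_rpow_neg_mul_le hμ1 hη.1 hηθ (B := L * (θ - η) ^ κ)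
    (fun s hs => by
      simpa only [abs_of_nonneg hδ.1] using hFhol θ hθ η hη s (mem_of_Ioo le_rfl hη.2 hs))
  have hmiddle := abs_integral_rpow_neg_sub_mul_le hμ0 hμ1 hη.1 hηθ
    (fun s hs => hFbdd η hη s (mem_of_Ioo le_rfl hη.2 hs))
  have htail := abs_integral_sub_rpow_neg_mul_le hμ1 hηθ le_rfl
    (fun s hs => hFbdd θ hθ s (mem_of_Ioo hη.1 hθ.2 hs))
  simp only [sub_zero, sub_self, Real.zero_rpow hμ'.ne'] at hfirst hmiddle htail
  have hθpow : θ ^ (1 - μ) ≤ 1 := Real.rpow_le_one hθ.1 hθ.2 hμ'.le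
  have hηpow : η ^ (1 - μ) ≤ θ ^ (1 - μ) := Real.rpow_le_rpow hη.1 hηθ hμ'.le
  have hδpow : (θ - η) ^ (1 - μ) ≤ (θ - η) ^ κ :=
    Real.rpow_le_rpow_of_exponent_ge' hδ.1 hδ.2 hκ0 hκμ
  have hδpow0 : 0 ≤ (θ - η) ^ (1 - μ) := Real.rpow_nonneg hδ.1 _
  have hδκ0 : 0 ≤ (θ - η) ^ κ := Real.rpow_nonneg hδ.1 _
  rw [weaklySingularIntegral_sub_eq hμ1 hη.1 hηθ ((hFcont θ hθ).mono (Icc_subset_Icc le_rfl hθ.2))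
    ((hFcont η hη).mono (Icc_subset_Icc le_rfl hη.2))]
  set I₁ := ∫ s in (0:ℝ)..η, (θ - s) ^ (-μ) * (F θ s - F η s)
  set I₂ := ∫ s in (0:ℝ)..η, ((η - s) ^ (-μ) - (θ - s) ^ (-μ)) * F η s
  set I₃ := ∫ s in η..θ, (θ - s) ^ (-μ) * F θ s
  have htriangle : |I₁ - I₂ + I₃| ≤ |I₁| + |I₂| + |I₃| := by
    linarith [abs_add_le (I₁ - I₂) I₃, abs_sub I₁ I₂]
  refine htriangle.trans ((add_le_add (add_le_add hfirst hmiddle) htail).trans ?_)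
  rw [div_mul_eq_mul_div, ← mul_div_assoc, ← mul_div_assoc, ← mul_div_assoc,
    ← add_div, ← add_div]
  refine div_le_div_of_nonneg_right ?_ hμ'.le
  nlinarith [mul_nonneg hL hδκ0]

theorem abs_weaklySingularIntegral_sub_le (hμ0 : 0 ≤ μ) (hμ1 : μ < 1) (hκ0 : 0 ≤ κ)
    (hκμ : κ ≤ 1 - μ) (hL : 0 ≤ L)
    (hFcont : ∀ t ∈ Icc (0:ℝ) 1, ContinuousOn (F t) (Icc 0 1))
    (hFbdd : ∀ t ∈ Icc (0:ℝ) 1, ∀ s ∈ Icc (0:ℝ) 1, |F t s| ≤ A)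
    (hFhol : ∀ θ ∈ Icc (0:ℝ) 1, ∀ η ∈ Icc (0:ℝ) 1, ∀ s ∈ Icc (0:ℝ) 1,
      |F θ s - F η s| ≤ L * |θ - η| ^ κ)
    {θ η : ℝ} (hθ : θ ∈ Icc (0:ℝ) 1) (hη : η ∈ Icc (0:ℝ) 1) :
    |weaklySingularIntegral μ F θ - weaklySingularIntegral μ F η|
      ≤ (L + 2 * A) / (1 - μ) * |θ - η| ^ κ := by
  rcases le_total η θ with h | h
  · rw [abs_of_nonneg (sub_nonneg.2 h)]
    exact abs_weaklySingularIntegral_sub_le_of_le hμ0 hμ1 hκ0 hκμ hL hFcont hFbdd hFhol hη hθ h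
  · rw [abs_sub_comm, abs_sub_comm θ, abs_of_nonneg (sub_nonneg.2 h)]
    exact abs_weaklySingularIntegral_sub_le_of_le hμ0 hμ1 hκ0 hκμ hL hFcont hFbdd hFhol hθ hη h

end WeaklySingularIntegral

theorem sSup_holderQuotient_le {s : Set ℝ} (hs : s.Nontrivial) {u : ℝ → ℝ} {κ H : ℝ}
    (hu : ∀ θ ∈ s, ∀ η ∈ s, |u θ - u η| ≤ H * |θ - η| ^ κ) :
    sSup {q : ℝ | ∃ θ ∈ s, ∃ η ∈ s, θ ≠ η ∧ q = |u θ - u η| / |θ - η| ^ κ} ≤ H := by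
  obtain ⟨θ, hθ, η, hη, hne⟩ := hs
  refine csSup_le ⟨_, θ, hθ, η, hη, hne, rfl⟩ ?_
  rintro q ⟨θ, hθ, η, hη, hne, rfl⟩
  rw [div_le_iff₀ (Real.rpow_pos_of_pos (abs_pos.2 (sub_ne_zero.2 hne)) _)]
  exact hu θ hθ η hη

theorem continuousOn_slice_mul {K : ℝ → ℝ → ℝ} {v : ℝ → ℝ} {s u : Set ℝ}
    (hK : ContinuousOn (fun p : ℝ × ℝ => K p.1 p.2) (s ×ˢ u)) (hv : ContinuousOn v u)
    {t : ℝ} (ht : t ∈ s) : ContinuousOn (fun x => K t x * v x) u :=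
  (hK.comp (Continuous.prodMk_right t).continuousOn fun _ hx => ⟨ht, hx⟩).mul hv

/-- For `μ ∈ (0,1)`, `κ ∈ (0,1-μ)` and `K` continuous and `κ`-Hölder in its first
variable, there is `C > 0` such that for every continuous `v` on `[0,1]`, `𝒦₁v`
is `κ`-Hölder continuous on `[0,1]` and its Hölder norm
`‖𝒦₁v‖_{0,κ} = max |𝒦₁v| + sup_{θ≠η} |𝒦₁v(θ)-𝒦₁v(η)|/|θ-η|^κ` is bounded
by `C · max |v|`. -/
theorem K1_maps_C_to_Holder (μ κ : ℝ) (hμ : μ ∈ Ioo (0:ℝ) 1)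
    (hκ : κ ∈ Ioo (0:ℝ) (1 - μ)) (K : ℝ → ℝ → ℝ)
    (hKcont : ContinuousOn (fun p : ℝ × ℝ => K p.1 p.2) (Icc 0 1 ×ˢ Icc 0 1))
    (Lip : ℝ) (hLip : 0 ≤ Lip)
    (hKH : ∀ θ₁ ∈ Icc (0:ℝ) 1, ∀ θ₂ ∈ Icc (0:ℝ) 1, ∀ s ∈ Icc (0:ℝ) 1,
      |K θ₁ s - K θ₂ s| ≤ Lip * |θ₁ - θ₂| ^ κ) :
    ∃ C > (0:ℝ), ∀ v : ℝ → ℝ, ContinuousOn v (Icc (0:ℝ) 1) →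
      (∃ H : ℝ, 0 ≤ H ∧ ∀ θ₁ ∈ Icc (0:ℝ) 1, ∀ θ₂ ∈ Icc (0:ℝ) 1,
        |K1op μ K v θ₁ - K1op μ K v θ₂| ≤ H * |θ₁ - θ₂| ^ κ) ∧
      sSup ((fun θ => |K1op μ K v θ|) '' Icc (0:ℝ) 1)
        + sSup {q : ℝ | ∃ θ ∈ Icc (0:ℝ) 1, ∃ η ∈ Icc (0:ℝ) 1, θ ≠ η ∧
            q = |K1op μ K v θ - K1op μ K v η| / |θ - η| ^ κ}
        ≤ C * sSup ((fun θ => |v θ|) '' Icc (0:ℝ) 1) := by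
  obtain ⟨hμ0, hμ1⟩ := hμ
  obtain ⟨hκ0, hκμ⟩ := hκ
  have h0 : (0:ℝ) ∈ Icc (0:ℝ) 1 := left_mem_Icc.2 zero_le_one
  obtain ⟨M, hM⟩ := (isCompact_Icc.prod isCompact_Icc).exists_bound_of_continuousOn hKcont
  have hKbdd : ∀ t ∈ Icc (0:ℝ) 1, ∀ s ∈ Icc (0:ℝ) 1, |K t s| ≤ M :=
    fun t ht s hs => hM (t, s) ⟨ht, hs⟩
  have hM0 : 0 ≤ M := (abs_nonneg _).trans (hKbdd 0 h0 0 h0)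
  refine ⟨(Lip + 3 * M + 1) / (1 - μ), div_pos (by linarith) (by linarith), fun v hv => ?_⟩
  set V := sSup ((fun θ => |v θ|) '' Icc (0:ℝ) 1)
  have hvbdd : ∀ s ∈ Icc (0:ℝ) 1, |v s| ≤ V :=
    fun s hs => le_csSup (isCompact_Icc.bddAbove_image hv.abs) ⟨s, hs, rfl⟩
  have hV0 : 0 ≤ V := (abs_nonneg _).trans (hvbdd 0 h0)
  have hFcont := fun t (ht : t ∈ Icc (0:ℝ) 1) => continuousOn_slice_mul hKcont hv ht
  have hFbdd : ∀ t ∈ Icc (0:ℝ) 1, ∀ s ∈ Icc (0:ℝ) 1, |K t s * v s| ≤ M * V := fun t ht s hs => by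
    rw [abs_mul]
    exact mul_le_mul (hKbdd t ht s hs) (hvbdd s hs) (abs_nonneg _) hM0
  have hFhol : ∀ θ ∈ Icc (0:ℝ) 1, ∀ η ∈ Icc (0:ℝ) 1, ∀ s ∈ Icc (0:ℝ) 1,
      |K θ s * v s - K η s * v s| ≤ Lip * V * |θ - η| ^ κ := fun θ hθ η hη s hs => by
    rw [← sub_mul, abs_mul, mul_right_comm]
    exact mul_le_mul (hKH θ hθ η hη s hs) (hvbdd s hs) (abs_nonneg _) (by positivity)
  have hHolder := fun θ hθ η hη => abs_weaklySingularIntegral_sub_le hμ0.le hμ1 hκ0.le hκμ.le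
    (mul_nonneg hLip hV0) hFcont hFbdd hFhol (θ := θ) (η := η) hθ hη
  rw [K1op_eq_weaklySingularIntegral]
  refine ⟨⟨_, div_nonneg (by positivity) (by linarith), hHolder⟩, ?_⟩
  have hsup : sSup ((fun θ => |weaklySingularIntegral μ _ θ|) '' Icc (0:ℝ) 1) ≤ M * V / (1 - μ) :=
    csSup_le ((nonempty_Icc.2 zero_le_one).image _) fun _ ⟨t, ht, hq⟩ =>
      hq ▸ abs_weaklySingularIntegral_le hμ1 hFbdd ht
  have hquot := sSup_holderQuotient_le ⟨0, h0, 1, right_mem_Icc.2 zero_le_one, zero_ne_one⟩ hHolder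
  calc _ ≤ M * V / (1 - μ) + (Lip * V + 2 * (M * V)) / (1 - μ) := add_le_add hsup hquot
    _ ≤ (Lip + 3 * M + 1) / (1 - μ) * V := by
      rw [div_mul_eq_mul_div, ← add_div]
      exact div_le_div_of_nonneg_right (by nlinarith) (by linarith)
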